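/- arXiv:2306.14381 — 2 statements merged into one kernel-verified Lean document; each statement's English description precedes it below -/
import Mathlib

section
/- Let f(x) = Σ_{i=1}^m log(1+exp(-(Ax)_i)) where all entries of A are bounded by M in absolute value. Then f is 2M-second order robust with respect to the ℓ₁ norm: for any x, x' ∈ ℝ^n with ‖x'-x‖₁ ≤ 1/(2M), we have (1/2)∇²f(x) ⪯ ∇²f(x') ⪯ 2∇²f(x) in the Loewner order. -/
open Real

private lemma w_formula (σ : ℝ → ℝ) (hσ : ∀ t, σ t = 1 / (1 + exp (-t)))
    (w : ℝ → ℝ) (hw : ∀ t, w t = σ t * (1 - σ t)) (t : ℝ) :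
    w t = 1 / (2 + exp t + exp (-t)) := by
  have h1 : (0:ℝ) < 1 + exp (-t) := by positivity
  have h2 : (0:ℝ) < 2 + exp t + exp (-t) := by positivity
  have hee : exp t * exp (-t) = 1 := by
    rw [← Real.exp_add]; simp
  rw [hw, hσ]
  field_simp
  nlinarith [hee]

private lemma w_ratio (σ : ℝ → ℝ) (hσ : ∀ t, σ t = 1 / (1 + exp (-t)))
    (w : ℝ → ℝ) (hw : ∀ t, w t = σ t * (1 - σ t)) (s t : ℝ)
    (h : |s - t| ≤ 1 / 2) : w s ≤ 2 * w t := by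
  rw [w_formula σ hσ w hw, w_formula σ hσ w hw]
  have hs : (0:ℝ) < 2 + exp s + exp (-s) := by positivity
  have ht : (0:ℝ) < 2 + exp t + exp (-t) := by positivity
  rw [mul_one_div, div_le_div_iff₀ hs ht, one_mul]
  -- need (2 + e^t + e^{-t}) ≤ 2 * (2 + e^s + e^{-s})
  have habs := abs_le.mp h
  have he2 : exp (1/2 : ℝ) ≤ 2 := by
    nlinarith [Real.exp_one_lt_d9, Real.exp_pos (1/2:ℝ),
      (Real.exp_add (1/2) (1/2)).symm, Real.exp_one_gt_d9]
  have h1 : exp t ≤ 2 * exp s := by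
    have : exp t ≤ exp (s + 1/2) := Real.exp_le_exp.mpr (by linarith)
    rw [Real.exp_add] at this
    nlinarith [Real.exp_pos s]
  have h2 : exp (-t) ≤ 2 * exp (-s) := by
    have : exp (-t) ≤ exp (-s + 1/2) := Real.exp_le_exp.mpr (by linarith)
    rw [Real.exp_add] at this
    nlinarith [Real.exp_pos (-s)]
  nlinarith

/-- Second-order robustness of the logistic loss w.r.t. the ℓ₁ norm:
if ‖x'-x‖₁ ≤ 1/(2M), then (1/2)∇²f(x) ⪯ ∇²f(x') ⪯ 2∇²f(x) in the Loewner
order, expressed via the quadratic forms yᵀ∇²f(z)y = Σᵢ w((Az)ᵢ)(Ay)ᵢ². -/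
theorem logistic_second_order_robustness
    {m n : ℕ} (A : Matrix (Fin m) (Fin n) ℝ) (M : ℝ) (hM : 0 < M)
    (hA : ∀ i j, |A i j| ≤ M)
    (σ : ℝ → ℝ) (hσ : ∀ t, σ t = 1 / (1 + exp (-t)))
    (w : ℝ → ℝ) (hw : ∀ t, w t = σ t * (1 - σ t))
    (x x' : Fin n → ℝ) (hx : (∑ j, |x' j - x j|) ≤ 1 / (2 * M)) (y : Fin n → ℝ) :
    (1 / 2) * (∑ i, w (A.mulVec x i) * (A.mulVec y i) ^ 2)
        ≤ ∑ i, w (A.mulVec x' i) * (A.mulVec y i) ^ 2 ∧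
      (∑ i, w (A.mulVec x' i) * (A.mulVec y i) ^ 2)
        ≤ 2 * ∑ i, w (A.mulVec x i) * (A.mulVec y i) ^ 2 := by
  have hclose : ∀ i, |A.mulVec x' i - A.mulVec x i| ≤ 1 / 2 := by
    intro i
    have : A.mulVec x' i - A.mulVec x i = ∑ j, A i j * (x' j - x j) := by
      simp [Matrix.mulVec, dotProduct, mul_sub, Finset.sum_sub_distrib]
    rw [this]
    calc |∑ j, A i j * (x' j - x j)| ≤ ∑ j, |A i j * (x' j - x j)| :=
          Finset.abs_sum_le_sum_abs _ _
      _ ≤ ∑ j, M * |x' j - x j| := by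
          apply Finset.sum_le_sum
          intro j _
          rw [abs_mul]
          exact mul_le_mul_of_nonneg_right (hA i j) (abs_nonneg _)
      _ = M * ∑ j, |x' j - x j| := by rw [Finset.mul_sum]
      _ ≤ M * (1 / (2 * M)) := by
          exact mul_le_mul_of_nonneg_left hx hM.le
      _ = 1 / 2 := by field_simp
  constructor
  · rw [Finset.mul_sum]
    apply Finset.sum_le_sum
    intro i _
    have h := w_ratio σ hσ w hw (A.mulVec x i) (A.mulVec x' i)
      (by have := hclose i; rw [abs_sub_comm] at this; linarith)
    nlinarith [sq_nonneg (A.mulVec y i)]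
  · rw [Finset.mul_sum]
    apply Finset.sum_le_sum
    intro i _
    have h := w_ratio σ hσ w hw (A.mulVec x' i) (A.mulVec x i) (hclose i)
    nlinarith [sq_nonneg (A.mulVec y i)]
end

section
/- Let f : ℝ^n → ℝ_{>0} be a convex twice continuously differentiable function that is γ-second order robust and μ-multiplicatively smooth with respect to the ℓ₂ norm. Let x, x* ∈ ℝ^n with ‖x - x*‖₂ ≤ R and f(x) > f(x*). Then the gradient step x' = x - η∇f(x) with η = min{1/(2μf(x)), 1/(γ‖∇f(x)‖₂)} satisfies f(x) - f(x') ≥ min{ (f(x)-f(x*))²/(4μ f(x) R²), (f(x)-f(x*))/(2γR) }. -/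
/-!
Convexity gives `f x - f x* ≤ ⟪∇f x, x - x*⟫ ≤ ‖∇f x‖ R`. The step has length `η ‖∇f x‖ ≤ 1/γ`,
so robustness bounds the Hessian along the whole step by twice its value at `x`, hence by
`2 μ f(x) ‖·‖²`. The second-order Taylor bound then shows that the step decreases `f` by at least
`η ‖∇f x‖² / 2`, as `2 μ f(x) η ≤ 1`; each of the two possible values of `η`, combined with the lower
bound on `‖∇f x‖`, gives one term of the minimum.
-/

open Set
open scoped InnerProductSpace

theorem le_add_deriv_add_half_of_deriv2_le {φ φ' φ'' : ℝ → ℝ} {M : ℝ}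
    (hφ : ∀ t, HasDerivAt φ (φ' t) t) (hφ' : ∀ t, HasDerivAt φ' (φ'' t) t)
    (hM : ∀ t ∈ Ioo (0 : ℝ) 1, φ'' t ≤ M) :
    φ 1 ≤ φ 0 + φ' 0 + M / 2 := by
  have hslope : ∀ t ∈ Icc (0 : ℝ) 1, φ' t - φ' 0 ≤ M * t := fun t ht => by
    simpa using (convex_Icc 0 1).image_sub_le_mul_sub_of_deriv_le
      (fun s _ => (hφ' s).continuousAt.continuousWithinAt)
      (fun s _ => (hφ' s).differentiableAt.differentiableWithinAt)
      (fun s hs => (hφ' s).deriv ▸ hM s (by rwa [interior_Icc] at hs))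
      0 (left_mem_Icc.2 zero_le_one) t ht ht.1
  set ψ : ℝ → ℝ := fun t => φ t - φ' 0 * t - M / 2 * t ^ 2
  have hψ : ∀ t, HasDerivAt ψ (φ' t - φ' 0 - M * t) t := fun t => by
    refine (((hφ t).sub ((hasDerivAt_id t).const_mul (φ' 0))).sub
      ((hasDerivAt_pow 2 t).const_mul (M / 2))).congr_deriv ?_
    simp only [Nat.cast_ofNat]
    ring
  have hanti : AntitoneOn ψ (Icc 0 1) :=
    antitoneOn_of_deriv_nonpos (convex_Icc 0 1)
      (fun s _ => (hψ s).continuousAt.continuousWithinAt)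
      (fun s _ => (hψ s).differentiableAt.differentiableWithinAt)
      (fun s hs => by
        rw [interior_Icc] at hs
        rw [(hψ s).deriv]
        linarith [hslope s (Ioo_subset_Icc_self hs)])
  have := hanti (left_mem_Icc.2 zero_le_one) (right_mem_Icc.2 zero_le_one) zero_le_one
  simp only [ψ] at this
  linarith

section NormedSpace

variable {E : Type*} [NormedAddCommGroup E] [NormedSpace ℝ E]

theorem Differentiable.hasDerivAt_comp_add_smul {g : E → ℝ} (hg : Differentiable ℝ g)
    (x v : E) (t : ℝ) :
    HasDerivAt (fun s : ℝ => g (x + s • v)) (fderiv ℝ g (x + t • v) v) t := by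
  have hline : HasDerivAt (fun s : ℝ => x + s • v) v t := by
    simpa using ((hasDerivAt_id t).smul_const v).const_add x
  exact (hg _).hasFDerivAt.comp_hasDerivAt t hline

theorem ContDiff.le_add_fderiv_add_half {f : E → ℝ} (hf : ContDiff ℝ 2 f) (x v : E) {M : ℝ}
    (hM : ∀ t ∈ Ioo (0 : ℝ) 1, fderiv ℝ (fun u => fderiv ℝ f u v) (x + t • v) v ≤ M) :
    f (x + v) ≤ f x + fderiv ℝ f x v + M / 2 := by
  have hf' : Differentiable ℝ fun u => fderiv ℝ f u v :=
    ((hf.fderiv_right (by norm_num)).clm_apply contDiff_const).differentiable one_ne_zero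
  simpa using le_add_deriv_add_half_of_deriv2_le
    ((hf.differentiable (by norm_num)).hasDerivAt_comp_add_smul x v)
    (hf'.hasDerivAt_comp_add_smul x v) hM

theorem ConvexOn.le_sub_of_hasFDerivAt {f : E → ℝ} (hf : ConvexOn ℝ univ f) {x : E}
    {f' : E →L[ℝ] ℝ} (hx : HasFDerivAt f f' x) (y : E) : f' (y - x) ≤ f y - f x := by
  have hline : HasDerivAt (f ∘ AffineMap.lineMap (k := ℝ) x y) (f' (y - x)) 0 :=
    hx.comp_hasDerivAt_of_eq 0 AffineMap.hasDerivAt_lineMap (by simp)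
  simpa [slope] using (hf.comp_affineMap (AffineMap.lineMap x y)).le_slope_of_hasDerivAt
    trivial trivial zero_lt_one hline

end NormedSpace

section InnerProductSpace

variable {F : Type*} [NormedAddCommGroup F] [InnerProductSpace ℝ F] [CompleteSpace F]
    {f : F → ℝ} {x g : F}

theorem ConvexOn.sub_le_norm_mul_of_hasGradientAt (hf : ConvexOn ℝ univ f)
    (hg : HasGradientAt f g x) (y : F) : f x - f y ≤ ‖g‖ * ‖x - y‖ := by
  have hsupport : ⟪g, y - x⟫_ℝ ≤ f y - f x := hf.le_sub_of_hasFDerivAt hg.hasFDerivAt y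
  calc f x - f y ≤ ⟪g, x - y⟫_ℝ := by rw [← neg_sub y x, inner_neg_right]; linarith
    _ ≤ ‖g‖ * ‖x - y‖ := real_inner_le_norm _ _

theorem HasGradientAt.gradient_step_le (hf : ContDiff ℝ 2 f) (hg : HasGradientAt f g x)
    {η L : ℝ} (hη : 0 ≤ η) (hηL : η * L ≤ 1)
    (hL : ∀ t ∈ Ioo (0 : ℝ) 1, fderiv ℝ (fun u => fderiv ℝ f u (-(η • g)))
      (x + t • -(η • g)) (-(η • g)) ≤ L * ‖η • g‖ ^ 2) :
    f (x - η • g) ≤ f x - η * ‖g‖ ^ 2 / 2 := by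
  have htaylor := hf.le_add_fderiv_add_half x (-(η • g)) hL
  rw [← sub_eq_add_neg, hg.fderiv_apply, inner_neg_right, real_inner_smul_right,
    real_inner_self_eq_norm_sq, norm_smul, Real.norm_of_nonneg hη] at htaylor
  nlinarith [mul_le_mul_of_nonneg_right hηL (by positivity : 0 ≤ η * ‖g‖ ^ 2)]

end InnerProductSpace

theorem min_gap_bound_le_step_decrease {a γ G R Δ : ℝ} (ha : 0 < a) (hγ : 0 < γ) (hR : 0 < R)
    (hG : 0 < G) (hΔ : 0 ≤ Δ) (hΔG : Δ ≤ G * R) :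
    min (Δ ^ 2 / (4 * a * R ^ 2)) (Δ / (2 * γ * R)) ≤
      min (1 / (2 * a)) (1 / (γ * G)) * G ^ 2 / 2 := by
  rw [mul_div_assoc, min_mul_of_nonneg _ _ (by positivity)]
  apply min_le_min
  · calc Δ ^ 2 / (4 * a * R ^ 2) ≤ (G * R) ^ 2 / (4 * a * R ^ 2) := by gcongr
      _ = 1 / (2 * a) * (G ^ 2 / 2) := by field_simp; ring
  · calc Δ / (2 * γ * R) ≤ G * R / (2 * γ * R) := by gcongr
      _ = 1 / (γ * G) * (G ^ 2 / 2) := by field_simp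

/-- Gradient update progress for a positive, convex, C² function that is
γ-second order robust and μ-multiplicatively smooth with respect to the
ℓ₂ norm. -/
theorem gradient_update_progress
    {n : ℕ} (f : EuclideanSpace ℝ (Fin n) → ℝ) (γ μ : ℝ) (hγ : 0 < γ) (hμ : 0 < μ)
    (hf : ContDiff ℝ 2 f) (hpos : ∀ y, 0 < f y) (hconv : ConvexOn ℝ Set.univ f)
    (Q : EuclideanSpace ℝ (Fin n) → EuclideanSpace ℝ (Fin n) → ℝ)
    (hQ : ∀ z y, Q z y = fderiv ℝ (fun u => fderiv ℝ f u y) z y)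
    -- γ-second order robustness w.r.t. ℓ₂
    (hrob : ∀ a b y, ‖b - a‖ ≤ 1 / γ →
      (1 / 2) * Q a y ≤ Q b y ∧ Q b y ≤ 2 * Q a y)
    -- μ-multiplicative smoothness w.r.t. ℓ₂
    (hms : ∀ z y, Q z y ≤ μ * f z * ‖y‖ ^ 2)
    (x xs gradfx : EuclideanSpace ℝ (Fin n)) (hgrad : HasGradientAt f gradfx x)
    (R : ℝ) (hR : 0 < R) (hdist : ‖x - xs‖ ≤ R) (hfx : f x > f xs)
    (η : ℝ) (hη : η = min (1 / (2 * μ * f x)) (1 / (γ * ‖gradfx‖)))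
    (x' : EuclideanSpace ℝ (Fin n)) (hx' : x' = x - η • gradfx) :
    f x - f x' ≥
      min ((f x - f xs) ^ 2 / (4 * μ * f x * R ^ 2)) ((f x - f xs) / (2 * γ * R)) := by
  have hfx0 := hpos x
  have hgap : f x - f xs ≤ ‖gradfx‖ * R :=
    (hconv.sub_le_norm_mul_of_hasGradientAt hgrad xs).trans (by gcongr)
  have hg : 0 < ‖gradfx‖ := by nlinarith [norm_nonneg gradfx]
  have hη0 : 0 ≤ η := hη ▸ le_min (by positivity) (by positivity)
  have hηL : η * (2 * μ * f x) ≤ 1 := by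
    have h : η ≤ 1 / (2 * μ * f x) := hη ▸ min_le_left _ _
    rwa [le_div_iff₀ (by positivity)] at h
  have hstep : ‖η • gradfx‖ ≤ 1 / γ := by
    have h : η ≤ 1 / (γ * ‖gradfx‖) := hη ▸ min_le_right _ _
    rw [norm_smul, Real.norm_of_nonneg hη0]
    calc η * ‖gradfx‖ ≤ 1 / (γ * ‖gradfx‖) * ‖gradfx‖ := by gcongr
      _ = 1 / γ := by field_simp
  have hdescent : f x' ≤ f x - η * ‖gradfx‖ ^ 2 / 2 := by
    refine hx' ▸ hgrad.gradient_step_le hf hη0 hηL fun t ht => ?_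
    have hnear : ‖x + t • -(η • gradfx) - x‖ ≤ 1 / γ := by
      rw [add_sub_cancel_left, norm_smul, norm_neg, Real.norm_of_nonneg ht.1.le]
      exact (mul_le_of_le_one_left (norm_nonneg _) ht.2.le).trans hstep
    rw [← hQ, ← norm_neg (η • gradfx)]
    linarith [(hrob x _ (-(η • gradfx)) hnear).2, hms x (-(η • gradfx))]
  have hbound := min_gap_bound_le_step_decrease (mul_pos hμ hfx0) hγ hR hg (by linarith) hgap
  simp only [← mul_assoc] at hbound
  rw [hη] at hdescent
  linarith
end
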